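/- Let f : ℝⁿ → ℝⁿ be the continuous piecewise-linear map f(x) = A_L x + b for cᵀx ≤ 0 and f(x) = A_R x + b for cᵀx ≥ 0, with A_R = A_L + a cᵀ. If det(A_L) · det(A_R) > 0 then f is a bijection. -/

import Mathlib

/-!
Put `d := cᵀ A_L⁻¹` and `μ := 1 + cᵀ A_L⁻¹ a`. Then `dᵀ A_L = cᵀ` and `dᵀ A_R = μ cᵀ`, while the
matrix determinant lemma gives `det A_R = μ det A_L`, so `μ > 0`. Hence the affine bijections
`x ↦ A_L x + b` and `x ↦ A_R x + b` both carry the half-space `cᵀx ≤ 0` onto the half-space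
`dᵀ(y - b) ≤ 0` and its complement onto the complement, and gluing them gives a bijection.
-/

open Matrix

theorem Function.bijective_ite_of_iff {α β : Type*} {p : α → Prop} [DecidablePred p]
    (q : β → Prop) {g h : α → β} (hg : Bijective g) (hh : Bijective h)
    (hgq : ∀ x, q (g x) ↔ p x) (hhq : ∀ x, q (h x) ↔ p x) :
    Bijective fun x => if p x then g x else h x := by
  constructor
  · intro x y hxy
    by_cases hx : p x <;> by_cases hy : p y <;> simp only [hx, hy, if_true, if_false] at hxy
    · exact hg.1 hxy
    · exact absurd ((hhq y).1 (hxy ▸ (hgq x).2 hx)) hy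
    · exact absurd ((hhq x).1 (hxy ▸ (hgq y).2 hy)) hx
    · exact hh.1 hxy
  · intro y
    by_cases hy : q y
    · obtain ⟨x, rfl⟩ := hg.2 y
      exact ⟨x, if_pos ((hgq x).1 hy)⟩
    · obtain ⟨x, rfl⟩ := hh.2 y
      exact ⟨x, if_neg fun hx => hy ((hhq x).2 hx)⟩

namespace Matrix

variable {m R : Type*} [Fintype m] [DecidableEq m] [CommRing R] {A : Matrix m m R}

theorem bijective_mulVec_add (hA : IsUnit A.det) (b : m → R) :
    Function.Bijective fun x => A *ᵥ x + b := by
  rw [← isUnit_iff_isUnit_det] at hA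
  exact (Equiv.addRight b).bijective.comp
    ⟨mulVec_injective_of_isUnit hA, mulVec_surjective_iff_isUnit.2 hA⟩

theorem det_add_vecMulVec (hA : IsUnit A.det) (u v : m → R) :
    (A + vecMulVec u v).det = A.det * (1 + v ⬝ᵥ A⁻¹ *ᵥ u) := by
  have hfactor : A + vecMulVec u v = A * (1 + vecMulVec (A⁻¹ *ᵥ u) v) := by
    rw [Matrix.mul_add, Matrix.mul_one, mul_vecMulVec, mulVec_mulVec, mul_nonsing_inv _ hA,
      one_mulVec]
  rw [hfactor, det_mul, vecMulVec_eq Unit, det_one_add_replicateCol_mul_replicateRow]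

theorem vecMul_inv_dotProduct_mulVec (hA : IsUnit A.det) (v x : m → R) :
    (v ᵥ* A⁻¹) ⬝ᵥ (A *ᵥ x) = v ⬝ᵥ x := by
  rw [dotProduct_mulVec, vecMul_vecMul, nonsing_inv_mul _ hA, vecMul_one]

theorem vecMul_inv_dotProduct_add_vecMulVec_mulVec (hA : IsUnit A.det) (u v x : m → R) :
    (v ᵥ* A⁻¹) ⬝ᵥ ((A + vecMulVec u v) *ᵥ x) = (1 + v ⬝ᵥ A⁻¹ *ᵥ u) * (v ⬝ᵥ x) := by
  rw [add_mulVec, dotProduct_add, vecMul_inv_dotProduct_mulVec hA, dotProduct_mulVec,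
    vecMul_vecMulVec, smul_dotProduct, ← dotProduct_mulVec, smul_eq_mul]
  ring

end Matrix

/-- A continuous piecewise-linear map with `det A_L ⬝ det A_R > 0` is a bijection. -/
theorem stmt_2 (n : ℕ) (A_L A_R : Matrix (Fin n) (Fin n) ℝ) (a b c : Fin n → ℝ)
    (hcont : A_R = A_L + Matrix.vecMulVec a c)
    (f : (Fin n → ℝ) → (Fin n → ℝ))
    (hf : ∀ x, f x = if c ⬝ᵥ x ≤ 0 then A_L.mulVec x + b else A_R.mulVec x + b)
    (hdet : 0 < A_L.det * A_R.det) :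
    Function.Bijective f := by
  have hL : IsUnit A_L.det := (left_ne_zero_of_mul hdet.ne').isUnit
  have hR : IsUnit A_R.det := (right_ne_zero_of_mul hdet.ne').isUnit
  have hμ : 0 < 1 + c ⬝ᵥ A_L⁻¹ *ᵥ a := by
    rw [hcont, det_add_vecMulVec hL, ← mul_assoc] at hdet
    exact pos_of_mul_pos_right hdet (mul_self_nonneg _)
  obtain rfl : f = _ := funext hf
  subst hcont
  refine Function.bijective_ite_of_iff (fun y => (c ᵥ* A_L⁻¹) ⬝ᵥ (y - b) ≤ 0)
    (bijective_mulVec_add hL b) (bijective_mulVec_add hR b) (fun x => ?_) (fun x => ?_)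
  · rw [add_sub_cancel_right, vecMul_inv_dotProduct_mulVec hL]
  · rw [add_sub_cancel_right, vecMul_inv_dotProduct_add_vecMulVec_mulVec hL, ← mul_zero (1 + _),
      mul_le_mul_iff_right₀ hμ, mul_zero]
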